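/- arXiv:1202.3907 — 5 statements merged into one kernel-verified Lean document; each statement's English description precedes it below -/
import Mathlib

section
/- For all integers k ≥ 2 and 2 ≤ j ≤ k, the threshold p̃ = sup{ p ∈ [0,1] : x = 0 is the unique fixed point of g_p in [0,1] } satisfies 0 < p̃ < 1. -/
open scoped Classical

noncomputable section

/-- The bootstrap recursion map `g_p(x) = p·∑_{i=k-j+1}^{k} C(k,i) xⁱ (1-x)^{k-i}`. -/
def g (k j : ℕ) (p x : ℝ) : ℝ :=
  p * ∑ i ∈ Finset.Icc (k - j + 1) k, (Nat.choose k i : ℝ) * x ^ i * (1 - x) ^ (k - i)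

/-- The critical threshold `p̃`: the supremum of the densities `p ∈ [0,1]` for which
`x = 0` is the unique fixed point of `g_p` in `[0,1]`. -/
def ptilde (k j : ℕ) : ℝ :=
  sSup {p : ℝ | p ∈ Set.Icc (0 : ℝ) 1 ∧ ∀ x ∈ Set.Icc (0 : ℝ) 1, g k j p x = x → x = 0}

/-!
Write `g_p(x) = p S(x)`, where `S(x) = P(Bin(k, x) ≥ k - j + 1)`.
For small `p` the map is a contraction towards `0`: every term of `S` has `i ≥ 1`,
so `g_p(x) ≤ p 2ᵏ x < x` for `x > 0` once `p < 2⁻ᵏ`.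

For `p` close to `1`: since `j ≥ 2`, `S(x)` contains its top two terms
`xᵏ + k xᵏ⁻¹ (1 - x)`, which exceed `x` at `x₀ = 1 - 1/k²` (Bernoulli's inequality).
So `g_p(x₀) > x₀` as soon as `p > x₀ / S(x₀)`, while `g_p(1) = p ≤ 1`, and the intermediate
value theorem yields a fixed point in `[x₀, 1]`. Hence `p̃ ≤ x₀ / S(x₀) < 1`.
-/

open Set

def binomTail (k m : ℕ) (x : ℝ) : ℝ :=
  ∑ i ∈ Finset.Icc m k, (Nat.choose k i : ℝ) * x ^ i * (1 - x) ^ (k - i)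

lemma g_eq_mul_binomTail (k j : ℕ) (p x : ℝ) : g k j p x = p * binomTail k (k - j + 1) x := rfl

lemma continuous_binomTail (k m : ℕ) : Continuous (binomTail k m) := by
  unfold binomTail
  fun_prop

lemma binomTail_one {k m : ℕ} (hmk : m ≤ k) : binomTail k m 1 = 1 := by
  unfold binomTail
  rw [Finset.sum_eq_single_of_mem k (Finset.mem_Icc.2 ⟨hmk, le_rfl⟩)]
  · simp
  · intro i hi hik
    have : k - i ≠ 0 := by rw [Finset.mem_Icc] at hi; omega
    simp [zero_pow this]

lemma binomTail_le_two_pow_mul {k m : ℕ} (hm : 1 ≤ m) {x : ℝ} (hx : x ∈ Icc (0 : ℝ) 1) :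
    binomTail k m x ≤ 2 ^ k * x := by
  obtain ⟨hx0, hx1⟩ := hx
  have hterm : ∀ i ∈ Finset.Icc m k,
      (Nat.choose k i : ℝ) * x ^ i * (1 - x) ^ (k - i) ≤ (Nat.choose k i : ℝ) * x := by
    intro i hi
    have hi1 : 1 ≤ i := hm.trans (Finset.mem_Icc.1 hi).1
    calc (Nat.choose k i : ℝ) * x ^ i * (1 - x) ^ (k - i)
        ≤ (Nat.choose k i : ℝ) * x ^ i * 1 := by
          gcongr
          exact pow_le_one₀ (by linarith) (by linarith)
      _ ≤ (Nat.choose k i : ℝ) * x := by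
          rw [mul_one]
          gcongr
          exact pow_le_of_le_one hx0 hx1 (by omega)
  have hchoose : ∑ i ∈ Finset.Icc m k, (Nat.choose k i : ℝ) ≤ 2 ^ k := by
    calc ∑ i ∈ Finset.Icc m k, (Nat.choose k i : ℝ)
        ≤ ∑ i ∈ Finset.range (k + 1), (Nat.choose k i : ℝ) :=
          Finset.sum_le_sum_of_subset_of_nonneg
            (fun i hi => by rw [Finset.mem_Icc] at hi; rw [Finset.mem_range]; omega)
            (fun _ _ _ => Nat.cast_nonneg _)
      _ = 2 ^ k := by exact_mod_cast Nat.sum_range_choose k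
  calc binomTail k m x ≤ ∑ i ∈ Finset.Icc m k, (Nat.choose k i : ℝ) * x := Finset.sum_le_sum hterm
    _ = (∑ i ∈ Finset.Icc m k, (Nat.choose k i : ℝ)) * x := by rw [Finset.sum_mul]
    _ ≤ 2 ^ k * x := by gcongr

lemma pow_add_mul_le_binomTail {k m : ℕ} (hmk : m < k) {x : ℝ} (hx : x ∈ Icc (0 : ℝ) 1) :
    x ^ k + k * x ^ (k - 1) * (1 - x) ≤ binomTail k m x := by
  obtain ⟨hx0, hx1⟩ := hx
  have htop : x ^ k + k * x ^ (k - 1) * (1 - x) =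
      ∑ i ∈ {k - 1, k}, (Nat.choose k i : ℝ) * x ^ i * (1 - x) ^ (k - i) := by
    rw [Finset.sum_pair (by omega), Nat.choose_self, Nat.sub_self,
      Nat.choose_symm_of_eq_add (show k = (k - 1) + 1 by omega), Nat.choose_one_right, show k - (k - 1) = 1 by omega]
    ring
  rw [htop]
  refine Finset.sum_le_sum_of_subset_of_nonneg ?_ fun i _ _ => ?_
  · intro i hi
    rw [Finset.mem_insert, Finset.mem_singleton] at hi
    rw [Finset.mem_Icc]
    omega
  · have : 0 ≤ 1 - x := by linarith
    positivity

lemma one_lt_one_sub_pow_mul (n : ℕ) {y : ℝ} (hy0 : 0 < y) (hy1 : y ≤ 1)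
    (hny : n * (n + 1) * y < 1) : 1 < (1 - y) ^ n * (1 + (n + 1) * y) := by
  have hbernoulli : 1 - n * y ≤ (1 - y) ^ n := by
    simpa [sub_eq_add_neg] using one_add_mul_le_pow (show (-2 : ℝ) ≤ -y by linarith) n
  calc 1 < (1 - n * y) * (1 + (n + 1) * y) := by nlinarith
    _ ≤ (1 - y) ^ n * (1 + (n + 1) * y) := by gcongr

lemma exists_lt_pow_add_mul {k : ℕ} (hk : 2 ≤ k) :
    ∃ x ∈ Ioo (0 : ℝ) 1, x < x ^ k + k * x ^ (k - 1) * (1 - x) := by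
  obtain ⟨n, rfl⟩ : ∃ n, k = n + 2 := ⟨k - 2, by omega⟩
  set y : ℝ := 1 / (n + 2) ^ 2 with hy
  have hy0 : 0 < y := by positivity
  have hy1 : y < 1 := by
    rw [hy, div_lt_one (by positivity)]
    nlinarith [(n.cast_nonneg : (0 : ℝ) ≤ n)]
  have hny : n * (n + 1) * y < 1 := by
    rw [hy, mul_one_div, div_lt_one (by positivity)]
    nlinarith [(n.cast_nonneg : (0 : ℝ) ≤ n)]
  refine ⟨1 - y, ⟨by linarith, by linarith⟩, ?_⟩
  have hfactor : (1 - y) ^ (n + 2) + ((n + 2 : ℕ) : ℝ) * (1 - y) ^ (n + 2 - 1) * (1 - (1 - y)) =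
      (1 - y) * ((1 - y) ^ n * (1 + (n + 1) * y)) := by
    rw [show n + 2 - 1 = n + 1 by omega]
    push_cast
    ring
  rw [hfactor]
  exact lt_mul_of_one_lt_right (by linarith) (one_lt_one_sub_pow_mul n hy0 hy1.le hny)

lemma eq_zero_of_g_eq_self_of_mul_two_pow_lt_one {k j : ℕ} {p x : ℝ} (hp0 : 0 ≤ p)
    (hp : p * 2 ^ k < 1) (hx : x ∈ Icc (0 : ℝ) 1) (hfix : g k j p x = x) : x = 0 := by
  by_contra hx0
  have hxpos : 0 < x := lt_of_le_of_ne hx.1 (Ne.symm hx0)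
  have : g k j p x ≤ p * 2 ^ k * x := by
    rw [g_eq_mul_binomTail, mul_assoc]
    exact mul_le_mul_of_nonneg_left (binomTail_le_two_pow_mul (by omega) hx) hp0
  nlinarith

lemma exists_g_eq_self_of_lt {k j : ℕ} (hj : 1 ≤ j) (hjk : j ≤ k) {p x₀ : ℝ} (hp : p ≤ 1)
    (hx₀ : x₀ ∈ Ioo (0 : ℝ) 1) (hlt : x₀ < g k j p x₀) :
    ∃ x ∈ Icc (0 : ℝ) 1, g k j p x = x ∧ x ≠ 0 := by
  have hcont : ContinuousOn (g k j p) (Icc x₀ 1) := by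
    simp_rw [funext (g_eq_mul_binomTail k j p)]
    exact (continuous_const.mul (continuous_binomTail _ _)).continuousOn
  have hone : g k j p 1 ≤ 1 := by
    rwa [g_eq_mul_binomTail, binomTail_one (by omega), mul_one]
  obtain ⟨x, hx, hfix⟩ := exists_mem_Icc_isFixedPt hcont hx₀.2.le hlt.le hone
  exact ⟨x, ⟨hx₀.1.le.trans hx.1, hx.2⟩, hfix, (hx₀.1.trans_le hx.1).ne'⟩

theorem ptilde_pos_lt_one (k j : ℕ) (hk : 2 ≤ k) (hj : 2 ≤ j) (hjk : j ≤ k) :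
    0 < ptilde k j ∧ ptilde k j < 1 := by
  set A := {p : ℝ | p ∈ Set.Icc (0 : ℝ) 1 ∧ ∀ x ∈ Set.Icc (0 : ℝ) 1, g k j p x = x → x = 0}
  have hsmall : (1 / 2 ^ (k + 1) : ℝ) ∈ A := by
    have hlt : (1 / 2 ^ (k + 1) : ℝ) * 2 ^ k < 1 := by
      rw [pow_succ, one_div_mul_eq_div, div_mul_cancel_left₀ (by positivity)]
      norm_num
    refine ⟨⟨by positivity, ?_⟩, fun x hx => eq_zero_of_g_eq_self_of_mul_two_pow_lt_one
      (by positivity) hlt hx⟩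
    rw [div_le_one (by positivity)]
    exact one_le_pow₀ (by norm_num)
  obtain ⟨x₀, hx₀, hlt⟩ := exists_lt_pow_add_mul hk
  have hS : x₀ < binomTail k (k - j + 1) x₀ :=
    hlt.trans_le (pow_add_mul_le_binomTail (by omega) (Ioo_subset_Icc_self hx₀))
  have hSpos : 0 < binomTail k (k - j + 1) x₀ := hx₀.1.trans hS
  have hbound : ∀ p ∈ A, p ≤ x₀ / binomTail k (k - j + 1) x₀ := by
    intro p ⟨hp, hunique⟩
    by_contra! hgt
    have hgx₀ : x₀ < g k j p x₀ := by
      rwa [div_lt_iff₀ hSpos, ← g_eq_mul_binomTail] at hgt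
    obtain ⟨x, hx, hfix, hx0⟩ := exists_g_eq_self_of_lt (by omega) hjk hp.2 hx₀ hgx₀
    exact hx0 (hunique x hx hfix)
  constructor
  · exact (by positivity : (0 : ℝ) < 1 / 2 ^ (k + 1)).trans_le
      (le_csSup ⟨1, fun p hp => hp.1.2⟩ hsmall)
  · exact (csSup_le ⟨_, hsmall⟩ hbound).trans_lt ((div_lt_one hSpos).2 hS)
end
end

section
/- For all integers k ≥ 3 and 2 ≤ j ≤ k-1 there exists p_0 < 1 such that for every p ∈ (p_0, 1): g_p(2p-1) > 2p-1 and g_p(p) < p, and hence g_p has a fixed point in the open interval (2p-1, p). -/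
open scoped Classical

noncomputable section

/-!
The sum in `g k j p x` is the probability that `Bin(k, x) ≥ k - j + 1`. At `x = p` it misses the
outcome `0`, so `g_p(p) < p`. At `x = 2p - 1 = 1 - t` it contains the outcomes `k - 1` and `k`
(as `j ≥ 2`), so `g_p(x) ≥ p x^{k-1} (1 + (k-1) t)`. With `p = 1 - t/2` and Bernoulli's
inequality `x^{k-2} ≥ 1 - (k-2) t`, this exceeds `x` as soon as `(2(k-1)(k-2) + 1) t < 1`.
The intermediate value theorem then gives the fixed point.
-/

open Finset

theorem exists_mem_Ioo_isFixedPt {α : Type*} [ConditionallyCompleteLinearOrder α]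
    [TopologicalSpace α] [OrderTopology α] [DenselyOrdered α] {a b : α} {f : α → α}
    (hf : ContinuousOn f (Set.Icc a b)) (hle : a ≤ b) (ha : a < f a) (hb : f b < b) :
    ∃ c ∈ Set.Ioo a b, Function.IsFixedPt f c := by
  obtain ⟨c, ⟨hac, hcb⟩, hc⟩ := exists_mem_Icc_isFixedPt hf hle ha.le hb.le
  refine ⟨c, ⟨hac.lt_of_ne ?_, hcb.lt_of_ne ?_⟩, hc⟩
  · rintro rfl; exact ha.ne hc.symm
  · rintro rfl; exact hb.ne hc

theorem continuous_g (k j : ℕ) (p : ℝ) : Continuous (g k j p) := by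
  unfold g; fun_prop

theorem sum_Icc_choose_mul_pow_lt_one {m k : ℕ} (hm : 1 ≤ m) {x : ℝ} (hx0 : 0 ≤ x)
    (hx1 : x < 1) :
    ∑ i ∈ Icc m k, (k.choose i : ℝ) * x ^ i * (1 - x) ^ (k - i) < 1 := by
  have hx1' : 0 < 1 - x := sub_pos.2 hx1
  calc ∑ i ∈ Icc m k, (k.choose i : ℝ) * x ^ i * (1 - x) ^ (k - i)
      < ∑ i ∈ range (k + 1), (k.choose i : ℝ) * x ^ i * (1 - x) ^ (k - i) := by
        refine sum_lt_sum_of_subset (i := 0) ?_ (by simp) (by simp; omega) (by simp; positivity)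
          fun i _ _ ↦ by positivity
        intro i hi
        simp only [mem_Icc, mem_range] at hi ⊢
        omega
    _ = (x + (1 - x)) ^ k := by
        rw [add_pow]; exact sum_congr rfl fun i _ ↦ by ring
    _ = 1 := by simp

theorem g_self_lt (k j : ℕ) {p : ℝ} (hp0 : 0 < p) (hp1 : p < 1) : g k j p p < p :=
  mul_lt_of_lt_one_right hp0 (sum_Icc_choose_mul_pow_lt_one le_add_self hp0.le hp1)

theorem mul_pow_mul_le_g {k j : ℕ} (hk : 2 ≤ k) (hj : 2 ≤ j) {p x : ℝ} (hp : 0 ≤ p)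
    (hx0 : 0 ≤ x) (hx1 : x ≤ 1) :
    p * (x ^ (k - 1) * (1 + (k - 1) * (1 - x))) ≤ g k j p x := by
  obtain ⟨n, rfl⟩ : ∃ n, k = n + 2 := ⟨k - 2, by omega⟩
  have hsub : {n + 1, n + 2} ⊆ Icc (n + 2 - j + 1) (n + 2) := by
    intro i hi
    simp only [mem_insert, mem_singleton, mem_Icc] at hi ⊢
    omega
  have htop : x ^ (n + 1) * (1 + (((n + 2 : ℕ) : ℝ) - 1) * (1 - x))
      = ∑ i ∈ {n + 1, n + 2}, ((n + 2).choose i : ℝ) * x ^ i * (1 - x) ^ (n + 2 - i) := by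
    rw [sum_pair (by omega), Nat.choose_succ_self_right, Nat.choose_self,
      show n + 2 - (n + 1) = 1 by omega, Nat.sub_self]
    push_cast; ring
  rw [g, show n + 2 - 1 = n + 1 from rfl, htop]
  refine mul_le_mul_of_nonneg_left (sum_le_sum_of_subset_of_nonneg hsub fun i _ _ ↦ ?_) hp
  have : 0 ≤ 1 - x := sub_nonneg.2 hx1
  positivity

theorem two_lt_mul_one_sub_pow_mul (n : ℕ) {t : ℝ} (ht0 : 0 < t)
    (ht : (2 * (n + 1) * n + 1) * t < 1) :
    2 < (2 - t) * (1 - t) ^ n * (1 + (n + 1) * t) := by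
  have ht1 : t < 1 := by
    have : 0 ≤ 2 * ((n : ℝ) + 1) * n * t := by positivity
    linarith
  have hbernoulli : 1 - n * t ≤ (1 - t) ^ n := by
    simpa [sub_eq_add_neg] using one_add_mul_le_pow (a := -t) (by linarith) n
  calc (2 : ℝ) < 2 + t * (1 - (2 * (n + 1) * n + 1) * t) + (n + 1) * n * t ^ 3 := by
        have : 0 < t * (1 - (2 * (n + 1) * n + 1) * t) := mul_pos ht0 (by linarith)
        have : 0 ≤ (n + 1) * n * t ^ 3 := by positivity
        linarith
    _ = (2 - t) * (1 - n * t) * (1 + (n + 1) * t) := by ring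
    _ ≤ (2 - t) * (1 - t) ^ n * (1 + (n + 1) * t) := by gcongr; linarith

theorem lt_g_two_mul_sub_one {k j : ℕ} (hk : 2 ≤ k) (hj : 2 ≤ j) {p : ℝ} (hp1 : p < 1)
    (hp : (2 * (k - 1) * (k - 2) + 1) * (2 * (1 - p)) < 1) :
    2 * p - 1 < g k j p (2 * p - 1) := by
  obtain ⟨n, rfl⟩ : ∃ n, k = n + 2 := ⟨k - 2, by omega⟩
  set t := 2 * (1 - p)
  have ht0 : 0 < t := by linarith
  have hnt : (2 * (n + 1) * n + 1) * t < 1 := by push_cast at hp; linarith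
  have hkey := two_lt_mul_one_sub_pow_mul n ht0 hnt
  have hx0 : 0 < 2 * p - 1 := by
    have : 0 ≤ 2 * ((n : ℝ) + 1) * n * t := by positivity
    linarith
  calc 2 * p - 1 < (2 * p - 1) / 2 * ((2 - t) * (1 - t) ^ n * (1 + (n + 1) * t)) := by
        nlinarith
    _ = p * ((2 * p - 1) ^ (n + 2 - 1) * (1 + ((n + 2 : ℕ) - 1) * (1 - (2 * p - 1)))) := by
        rw [show n + 2 - 1 = n + 1 from rfl, show 1 - t = 2 * p - 1 by linarith]; push_cast; ring
    _ ≤ g (n + 2) j p (2 * p - 1) := mul_pow_mul_le_g hk hj (by linarith) hx0.le (by linarith)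

theorem fixed_point_near_one_general (k j : ℕ) (hk : 3 ≤ k) (hj : 2 ≤ j) :
    ∃ p₀ : ℝ, p₀ < 1 ∧ ∀ p ∈ Set.Ioo p₀ 1,
      2 * p - 1 < g k j p (2 * p - 1) ∧ g k j p p < p ∧
      ∃ x ∈ Set.Ioo (2 * p - 1) p, g k j p x = x := by
  set C : ℝ := 2 * (k - 1) * (k - 2) + 1
  have hC : 1 ≤ C := by
    have : (3 : ℝ) ≤ k := by exact_mod_cast hk
    nlinarith
  refine ⟨1 - 1 / (2 * C), by simp; positivity, fun p ⟨hp₀, hp1⟩ ↦ ?_⟩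
  have hpC : C * (2 * (1 - p)) < 1 := by
    rw [sub_lt_comm, lt_div_iff₀ (by positivity)] at hp₀; linarith
  have hp0 : 1 / 2 < p := by
    have : 1 / (2 * C) ≤ 1 / 2 := by gcongr; linarith
    linarith
  have hlow := lt_g_two_mul_sub_one (by omega) hj hp1 hpC
  have hup := g_self_lt k j (by linarith) hp1
  exact ⟨hlow, hup,
    exists_mem_Ioo_isFixedPt (continuous_g k j p).continuousOn (by linarith) hlow hup⟩

theorem fixed_point_near_one (k j : ℕ) (hk : 3 ≤ k) (hj : 2 ≤ j) (hjk : j ≤ k - 1) :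
    ∃ p₀ : ℝ, p₀ < 1 ∧ ∀ p ∈ Set.Ioo p₀ 1,
      2 * p - 1 < g k j p (2 * p - 1) ∧ g k j p p < p ∧
      ∃ x ∈ Set.Ioo (2 * p - 1) p, g k j p x = x :=
  fixed_point_near_one_general k j hk hj
end
end

section
/- Let k ≥ 2, 1 ≤ j ≤ k and p ∈ [0,1]. If x* ∈ (0,1] is a fixed point of g_p (g_p(x*) = x*), then x* ≤ p and for every n ≥ 0 the iterate g_p^{∘n}(p) satisfies g_p^{∘n}(p) ≥ x*; in particular the iterates of g_p started at p do not converge to 0. -/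
/-!
`g_p(x)` is `p` times the upper tail `∑_{ν ≥ m} b_{k,ν}(x)` of the Bernstein basis (the
probability that `Bin(k, x) ≥ m`), with `m = k - j + 1`. Such a tail lies in `[0, 1]` on `[0, 1]`
and is nondecreasing there, because its derivative telescopes to `k · b_{k-1,m-1} ≥ 0`. So `g_p`
is a monotone self-map of `[0, 1]` bounded by `p`: this gives `x* = g_p(x*) ≤ p`, and by induction
`x* = g_p(x*) ≤ g_p(g_p^[n] p) = g_p^[n+1] p`.
-/

open scoped Classical

noncomputable section

open Finset Polynomial Function

section BernsteinTail

variable (R : Type*) [CommRing R]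

def bernsteinTail (n m : ℕ) : R[X] :=
  ∑ ν ∈ Icc m n, bernsteinPolynomial R n ν

theorem bernsteinTail_zero (n : ℕ) : bernsteinTail R n 0 = 1 := by
  rw [bernsteinTail, ← Nat.range_succ_eq_Icc_zero, bernsteinPolynomial.sum]

theorem derivative_bernsteinTail_succ (n m : ℕ) :
    derivative (bernsteinTail R n (m + 1)) = n * bernsteinPolynomial R (n - 1) m := by
  rcases n with _ | n
  · simp [bernsteinTail]
  rw [Nat.add_sub_cancel]
  rcases le_or_gt m (n + 1) with hm | hm
  · have telescope : ∑ ν ∈ Ico m (n + 1),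
        (bernsteinPolynomial R n ν - bernsteinPolynomial R n (ν + 1)) =
          bernsteinPolynomial R n m := by
      rw [← neg_inj, ← sum_neg_distrib]
      simp only [neg_sub]
      rw [sum_Ico_sub _ hm, bernsteinPolynomial.eq_zero_of_lt R n.lt_succ_self, zero_sub]
    rw [bernsteinTail, ← Ico_add_one_right_eq_Icc, ← sum_Ico_add', derivative_sum]
    simp_rw [bernsteinPolynomial.derivative_succ, Nat.add_sub_cancel, ← mul_sum, telescope]
  · rw [bernsteinTail, Icc_eq_empty (by omega), sum_empty, derivative_zero,
      bernsteinPolynomial.eq_zero_of_lt R (by omega : n < m), mul_zero]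

end BernsteinTail

theorem bernsteinPolynomial_eval_nonneg (n ν : ℕ) {x : ℝ} (hx : x ∈ Set.Icc 0 1) :
    0 ≤ (bernsteinPolynomial ℝ n ν).eval x := by
  obtain ⟨hx0, hx1⟩ := hx
  have : 0 ≤ 1 - x := sub_nonneg.2 hx1
  simp only [bernsteinPolynomial, eval_mul, eval_pow, eval_sub, eval_one, eval_X, eval_natCast]
  positivity

theorem bernsteinTail_eval_nonneg (n m : ℕ) {x : ℝ} (hx : x ∈ Set.Icc 0 1) :
    0 ≤ (bernsteinTail ℝ n m).eval x := by
  rw [bernsteinTail, eval_finsetSum]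
  exact sum_nonneg fun ν _ => bernsteinPolynomial_eval_nonneg n ν hx

theorem bernsteinTail_eval_le_one (n m : ℕ) {x : ℝ} (hx : x ∈ Set.Icc 0 1) :
    (bernsteinTail ℝ n m).eval x ≤ 1 :=
  calc (bernsteinTail ℝ n m).eval x ≤ (bernsteinTail ℝ n 0).eval x := by
        simp only [bernsteinTail, eval_finsetSum]
        exact sum_le_sum_of_subset_of_nonneg (Icc_subset_Icc_left m.zero_le)
          fun ν _ _ => bernsteinPolynomial_eval_nonneg n ν hx
    _ = 1 := by rw [bernsteinTail_zero, eval_one]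

theorem bernsteinTail_eval_monotoneOn (n m : ℕ) :
    MonotoneOn (fun x => (bernsteinTail ℝ n m).eval x) (Set.Icc 0 1) := by
  refine monotoneOn_of_deriv_nonneg (convex_Icc 0 1) (Polynomial.continuousOn _)
    (Polynomial.differentiableOn _) fun x hx => ?_
  rw [interior_Icc] at hx
  rw [Polynomial.deriv]
  rcases m with _ | m
  · rw [bernsteinTail_zero, derivative_one, eval_zero]
  · rw [derivative_bernsteinTail_succ, eval_mul, eval_natCast]
    exact mul_nonneg n.cast_nonneg
      (bernsteinPolynomial_eval_nonneg _ m (Set.Ioo_subset_Icc_self hx))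

theorem MonotoneOn.le_iterate_of_isFixedPt {α : Type*} [Preorder α] {f : α → α} {s : Set α}
    (hf : MonotoneOn f s) (hs : Set.MapsTo f s s) {a x : α} (ha : a ∈ s) (hx : x ∈ s)
    (hfa : IsFixedPt f a) (hax : a ≤ x) (n : ℕ) : a ≤ f^[n] x := by
  induction n with
  | zero => exact hax
  | succ n ih =>
    rw [iterate_succ_apply']
    calc a = f a := hfa.symm
      _ ≤ f (f^[n] x) := hf ha (hs.iterate n hx) ih

theorem g_eq_mul_eval_bernsteinTail (k j : ℕ) (p x : ℝ) :
    g k j p x = p * (bernsteinTail ℝ k (k - j + 1)).eval x := by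
  simp [g, bernsteinTail, bernsteinPolynomial, eval_finsetSum]

theorem g_le (k j : ℕ) {p x : ℝ} (hp : 0 ≤ p) (hx : x ∈ Set.Icc 0 1) : g k j p x ≤ p := by
  rw [g_eq_mul_eval_bernsteinTail]
  exact mul_le_of_le_one_right hp (bernsteinTail_eval_le_one _ _ hx)

theorem g_mapsTo_Icc (k j : ℕ) {p : ℝ} (hp : p ∈ Set.Icc 0 1) :
    Set.MapsTo (g k j p) (Set.Icc 0 1) (Set.Icc 0 1) := fun x hx => by
  refine ⟨?_, (g_le k j hp.1 hx).trans hp.2⟩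
  rw [g_eq_mul_eval_bernsteinTail]
  exact mul_nonneg hp.1 (bernsteinTail_eval_nonneg _ _ hx)

theorem g_monotoneOn (k j : ℕ) {p : ℝ} (hp : 0 ≤ p) : MonotoneOn (g k j p) (Set.Icc 0 1) :=
  fun x hx y hy hxy => by
    simp only [g_eq_mul_eval_bernsteinTail]
    exact mul_le_mul_of_nonneg_left (bernsteinTail_eval_monotoneOn _ _ hx hy hxy) hp

theorem iterates_ge_fixed_point_general (k j : ℕ) (p : ℝ)
    (hp : p ∈ Set.Icc (0 : ℝ) 1) (xs : ℝ) (hxs : xs ∈ Set.Ioc (0 : ℝ) 1)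
    (hfix : g k j p xs = xs) :
    xs ≤ p ∧ (∀ n : ℕ, xs ≤ (g k j p)^[n] p) ∧
    ¬ Filter.Tendsto (fun n : ℕ => (g k j p)^[n] p) Filter.atTop (nhds 0) := by
  have hxs_mem : xs ∈ Set.Icc 0 1 := Set.Ioc_subset_Icc_self hxs
  have hxs_le : xs ≤ p := hfix ▸ g_le k j hp.1 hxs_mem
  have hiter : ∀ n, xs ≤ (g k j p)^[n] p :=
    (g_monotoneOn k j hp.1).le_iterate_of_isFixedPt (g_mapsTo_Icc k j hp) hxs_mem hp hfix hxs_le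
  refine ⟨hxs_le, hiter, fun hlim => ?_⟩
  exact hxs.1.not_ge (ge_of_tendsto hlim (Filter.Eventually.of_forall hiter))

theorem iterates_ge_fixed_point (k j : ℕ) (p : ℝ) (hk : 2 ≤ k) (hj1 : 1 ≤ j) (hjk : j ≤ k)
    (hp : p ∈ Set.Icc (0 : ℝ) 1) (xs : ℝ) (hxs : xs ∈ Set.Ioc (0 : ℝ) 1)
    (hfix : g k j p xs = xs) :
    xs ≤ p ∧ (∀ n : ℕ, xs ≤ (g k j p)^[n] p) ∧
    ¬ Filter.Tendsto (fun n : ℕ => (g k j p)^[n] p) Filter.atTop (nhds 0) :=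
  iterates_ge_fixed_point_general k j p hp xs hxs hfix
end
end

section
/- Let k ≥ 2, 1 ≤ j ≤ k and p ∈ [0,1]. On the rooted k-ary tree of depth n with Bernoulli(p) product measure μ, for every n ≥ 0 the probability that the root is occupied after n iterations of the oriented bootstrap map equals the n-th iterate of g_p at p: μ({η : B̄^{∘n}(η)_r = 1}) = g_p^{∘n}(p), where r is the root. -/
open scoped Classical

noncomputable section

section Bernoulli

variable {V : Type*} [Fintype V] [DecidableEq V]

/-- Bernoulli(p) product weight of a configuration (`true` = occupied, with probability `p`). -/
def wt (p : ℝ) (η : V → Bool) : ℝ := ∏ x : V, if η x then p else 1 - p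

/-- Expectation under the Bernoulli(p) product measure μ. -/
def mean (p : ℝ) (f : (V → Bool) → ℝ) : ℝ := ∑ η : V → Bool, wt p η * f η

/-- Probability of an event under the Bernoulli(p) product measure μ. -/
def probEv (p : ℝ) (E : (V → Bool) → Prop) : ℝ := mean p (fun η => if E η then 1 else 0)

/-- Conditional expectation `μ_A(f)` of `f` given the coordinates outside `A`. -/
def cexp (p : ℝ) (A : Finset V) (f : (V → Bool) → ℝ) (η : V → Bool) : ℝ :=
  ∑ ζ : V → Bool,
    (∏ x : V, if x ∈ A then (if ζ x then p else 1 - p) else (if ζ x = η x then 1 else 0)) * f ζ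

/-- Conditional variance `Var_A(f)` on the coordinates of `A` given the remaining coordinates. -/
def cvar (p : ℝ) (A : Finset V) (f : (V → Bool) → ℝ) (η : V → Bool) : ℝ :=
  cexp p A (fun ζ => f ζ ^ 2) η - (cexp p A f η) ^ 2

/-- Variance `Var_μ(f)` under the Bernoulli(p) product measure. -/
def varTot (p : ℝ) (f : (V → Bool) → ℝ) : ℝ := mean p (fun η => f η ^ 2) - (mean p f) ^ 2

end Bernoulli

/-- Vertices of the rooted `k`-ary tree of depth `n`: words of length `≤ n` over `Fin k`. -/
abbrev TV (k n : ℕ) := Σ m : Fin (n + 1), Fin m.val → Fin k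

/-- The root: the empty word. -/
def rootT (k n : ℕ) : TV k n := ⟨⟨0, Nat.succ_pos n⟩, Fin.elim0⟩

/-- `y` is a child of `x` in the rooted tree. -/
def childOf {k n : ℕ} (x y : TV k n) : Prop :=
  ∃ h : y.1.val = x.1.val + 1, ∀ i : Fin x.1.val, y.2 (Fin.cast h.symm i.castSucc) = x.2 i

/-- The oriented bootstrap map `B̄`: a vertex becomes empty iff it is already empty or
at least `j` of its children are empty. -/
def bootO {k n : ℕ} (j : ℕ) (η : TV k n → Bool) : TV k n → Bool := fun x =>
  if η x = false ∨ j ≤ (Finset.univ.filter fun y : TV k n => childOf x y ∧ η y = false).card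
  then false else true


/-!
The oriented map only looks at children, so the subtree below a child `c` of the root evolves
exactly as a copy of the depth-`n` tree. Since the iterates of `bootO` decrease, the root of the
depth-`(n+1)` tree is occupied after `n + 1` steps iff it is occupied initially and fewer than `j`
of the `n`-step iterates of its `k` subtrees have an empty root. Under the product measure the root
and the `k` subtrees are independent, and by induction each subtree root survives with probability
`q = g_p^{∘n}(p)`; so the number of surviving children is binomial `(k, q)` and the root survives
with probability `p · ℙ[Bin(k, q) ≥ k - j + 1] = g_p(q)`.
-/

open Finset

section Bernoulli

variable {V : Type*} [Fintype V] [DecidableEq V] (p : ℝ)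

theorem sum_wt : ∑ η : V → Bool, wt p η = 1 := by
  simp [wt, ← Fintype.prod_sum (κ := fun _ => Bool) fun (_ : V) (b : Bool) =>
    if b then p else 1 - p]

theorem probEv_add_probEv_not (E : (V → Bool) → Prop) :
    probEv p E + probEv p (fun η => ¬E η) = 1 := by
  rw [← sum_wt (V := V) p, probEv, probEv, mean, mean, ← sum_add_distrib]
  refine sum_congr rfl fun η _ => ?_
  by_cases h : E η <;> simp [h]

theorem probEv_iff_eq_ite (F : (V → Bool) → Prop) (P : Prop) [Decidable P] :
    probEv p (fun ξ => F ξ ↔ P) = if P then probEv p F else 1 - probEv p F := by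
  by_cases hP : P
  · simp [hP]
  · simp [hP, ← probEv_add_probEv_not p F]

theorem probEv_coord (x : V) : probEv p (fun η => η x = true) = p := by
  set h : V → Bool → ℝ := fun y b =>
    (if b then p else 1 - p) * (if y = x then (if b then 1 else 0) else 1)
  have hfactor (η : V → Bool) : wt p η * (if η x = true then 1 else 0) = ∏ y, h y (η y) := by
    rw [prod_mul_distrib, prod_ite_eq']
    simp [wt]
  calc probEv p (fun η => η x = true) = ∑ η : V → Bool, ∏ y, h y (η y) :=
        sum_congr rfl fun η _ => by convert hfactor η
    _ = p := by rw [← Fintype.prod_sum]; simp [h, prod_ite_eq']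

end Bernoulli

/-- Independence of the factors: the indices `c` with `F (f c)` form a random subset containing
each index independently with probability `probEv p F`. -/
theorem sum_prod_wt_mul_filter {ι W : Type*} [Fintype ι] [DecidableEq ι] [Fintype W]
    [DecidableEq W] (p : ℝ) (F : (W → Bool) → Prop) [DecidablePred F] (φ : Finset ι → ℝ) :
    ∑ f : ι → W → Bool, (∏ c, wt p (f c)) * φ {c | F (f c)} =
      ∑ s : Finset ι, φ s * probEv p F ^ #s * (1 - probEv p F) ^ (Fintype.card ι - #s) := by
  have hφ (f : ι → W → Bool) :
      φ {c | F (f c)} = ∑ s, φ s * ∏ c, if (F (f c) ↔ c ∈ s) then 1 else 0 := by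
    have hiff (s : Finset ι) : (∀ c, (F (f c) ↔ c ∈ s)) ↔ ({c | F (f c)} : Finset ι) = s := by
      simp [Finset.ext_iff]
    simp_rw [Fintype.prod_boole, hiff]
    simp
  have hcoord (s : Finset ι) (c : ι) :
      ∑ ξ : W → Bool, wt p ξ * (if (F ξ ↔ c ∈ s) then 1 else 0) =
        if c ∈ s then probEv p F else 1 - probEv p F := by
    rw [← probEv_iff_eq_ite]
    unfold probEv mean
    congr!
  calc ∑ f : ι → W → Bool, (∏ c, wt p (f c)) * φ {c | F (f c)}
      = ∑ s, φ s * ∑ f : ι → W → Bool,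
          ∏ c, wt p (f c) * (if (F (f c) ↔ c ∈ s) then 1 else 0) := by
        simp_rw [hφ, mul_sum, prod_mul_distrib]
        rw [sum_comm]
        exact sum_congr rfl fun _ _ => sum_congr rfl fun _ _ => by ring
    _ = ∑ s, φ s * ∏ c, if c ∈ s then probEv p F else 1 - probEv p F := by
        simp_rw [← hcoord, Fintype.prod_sum]
    _ = _ := by
        refine sum_congr rfl fun s _ => ?_
        rw [prod_ite, prod_const, prod_const, ← card_compl, mul_assoc]
        congr 4
        · ext; simp
        · ext; simp

theorem sum_ite_card_compl_lt_mul_pow {ι : Type*} [Fintype ι] [DecidableEq ι] {j : ℕ}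
    (hj : j ≤ Fintype.card ι) (q : ℝ) :
    ∑ s : Finset ι, (if #sᶜ < j then (1 : ℝ) else 0) * q ^ #s * (1 - q) ^ (Fintype.card ι - #s) =
      ∑ i ∈ Icc (Fintype.card ι - j + 1) (Fintype.card ι),
        ((Fintype.card ι).choose i : ℝ) * q ^ i * (1 - q) ^ (Fintype.card ι - i) := by
  set n := Fintype.card ι
  have hIcc : Icc (n - j + 1) n = {i ∈ range (n + 1) | n - i < j} := by
    ext i; simp only [mem_Icc, mem_filter, mem_range]; omega
  simp_rw [card_compl]
  rw [← powerset_univ, sum_powerset_apply_card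
    (fun i => (if n - i < j then (1 : ℝ) else 0) * q ^ i * (1 - q) ^ (n - i)), hIcc, sum_filter]
  refine sum_congr (by rw [card_univ]) fun i _ => ?_
  split_ifs <;> simp [n, mul_assoc]

namespace TV

variable {k n : ℕ}

theorem ext_get {x y : TV k n} (hlen : x.1.val = y.1.val)
    (hget : ∀ (i : ℕ) (hx : i < x.1.val) (hy : i < y.1.val), x.2 ⟨i, hx⟩ = y.2 ⟨i, hy⟩) :
    x = y := by
  obtain ⟨⟨m, _⟩, f⟩ := x
  obtain ⟨⟨m', _⟩, f'⟩ := y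
  obtain rfl : m = m' := hlen
  simp only [Sigma.mk.inj_iff, heq_eq_eq, true_and]
  exact funext fun i => hget i i.2 i.2

theorem get_congr {x y : TV k n} (h : x = y) (i : ℕ) (hx : i < x.1.val) (hy : i < y.1.val) :
    x.2 ⟨i, hx⟩ = y.2 ⟨i, hy⟩ := by
  subst h; rfl

theorem eq_root_iff (z : TV k n) : z = rootT k n ↔ z.1.val = 0 :=
  ⟨fun h => h ▸ rfl, fun h => ext_get h fun _ _ hy => absurd hy (Nat.not_lt_zero _)⟩

theorem childOf_iff {x y : TV k n} : childOf x y ↔ y.1.val = x.1.val + 1 ∧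
    ∀ (i : ℕ) (hx : i < x.1.val) (hy : i < y.1.val), y.2 ⟨i, hy⟩ = x.2 ⟨i, hx⟩ :=
  ⟨fun ⟨hlen, hget⟩ => ⟨hlen, fun i hx _ => hget ⟨i, hx⟩⟩,
    fun ⟨hlen, hget⟩ => ⟨hlen, fun i => hget i i.2 (by omega)⟩⟩

def cons (c : Fin k) (x : TV k n) : TV k (n + 1) :=
  ⟨⟨x.1.val + 1, by omega⟩, Fin.cons c x.2⟩

@[simp]
theorem len_cons (c : Fin k) (x : TV k n) : (cons c x).1.val = x.1.val + 1 := rfl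

theorem cons_ne_root (c : Fin k) (x : TV k n) : cons c x ≠ rootT k (n + 1) := by
  simp [eq_root_iff]

theorem cons_inj {c c' : Fin k} {x x' : TV k n} :
    cons c x = cons c' x' ↔ c = c' ∧ x = x' := by
  refine ⟨fun h => ⟨?_, ?_⟩, fun ⟨hc, hx⟩ => hc ▸ hx ▸ rfl⟩
  · exact get_congr h 0 (by simp) (by simp)
  · have hlen : x.1.val = x'.1.val := by simpa using congrArg (fun z => z.1.val) h
    exact ext_get hlen fun i hx hy => get_congr h (i + 1) (by simpa) (by simpa)

theorem exists_eq_cons (z : TV k (n + 1)) (h : 0 < z.1.val) : ∃ c x, z = cons c x := by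
  refine ⟨z.2 ⟨0, h⟩, ⟨⟨z.1.val - 1, by omega⟩, fun i => z.2 ⟨i.val + 1,
    Nat.add_lt_of_lt_sub i.2⟩⟩, ?_⟩
  refine ext_get (by simp; omega) fun i _ _ => ?_
  rcases i with _ | i <;> rfl

theorem eq_root_or_exists_eq_cons (z : TV k (n + 1)) :
    z = rootT k (n + 1) ∨ ∃ c x, z = cons c x :=
  (Nat.eq_zero_or_pos z.1.val).imp (eq_root_iff z).2 (exists_eq_cons z)

theorem childOf_cons_cons {c c' : Fin k} {x y : TV k n} :
    childOf (cons c x) (cons c' y) ↔ c' = c ∧ childOf x y := by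
  simp only [childOf_iff, len_cons, add_left_inj]
  constructor
  · rintro ⟨hlen, hget⟩
    refine ⟨?_, hlen, fun i hx hy => hget (i + 1) (by simpa) (by simpa)⟩
    exact hget 0 (by simp) (by simp)
  · rintro ⟨rfl, hlen, hget⟩
    refine ⟨hlen, fun i hx hy => ?_⟩
    rcases i with _ | i
    · rfl
    · exact hget i (by simpa using hx) (by simpa using hy)

theorem childOf_cons_iff (c : Fin k) (x : TV k n) (z : TV k (n + 1)) :
    childOf (cons c x) z ↔ ∃ y, childOf x y ∧ z = cons c y := by
  constructor
  · intro hz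
    obtain ⟨c', y, rfl⟩ := exists_eq_cons z (by rw [(childOf_iff.1 hz).1]; omega)
    obtain ⟨rfl, hy⟩ := childOf_cons_cons.1 hz
    exact ⟨y, hy, rfl⟩
  · rintro ⟨y, hy, rfl⟩
    exact childOf_cons_cons.2 ⟨rfl, hy⟩

theorem childOf_root_iff (z : TV k (n + 1)) :
    childOf (rootT k (n + 1)) z ↔ ∃ c, z = cons c (rootT k n) := by
  constructor
  · intro hz
    have hlen : z.1.val = 1 := (childOf_iff.1 hz).1
    obtain ⟨c, x, rfl⟩ := exists_eq_cons z (by omega)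
    exact ⟨c, by rw [(eq_root_iff x).2 (by simpa using hlen)]⟩
  · rintro ⟨c, rfl⟩
    exact childOf_iff.2 ⟨rfl, fun i hx => absurd hx (Nat.not_lt_zero _)⟩

def decompEquiv (k n : ℕ) : Option (Fin k × TV k n) ≃ TV k (n + 1) :=
  Equiv.ofBijective (fun o => o.elim (rootT k (n + 1)) fun cx => cons cx.1 cx.2) <| by
    refine ⟨?_, fun z => ?_⟩
    · rintro (_ | ⟨c, x⟩) (_ | ⟨c', x'⟩) h
      · rfl
      · exact absurd h.symm (cons_ne_root c' x')
      · exact absurd h (cons_ne_root c x)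
      · obtain ⟨rfl, rfl⟩ := cons_inj.1 h
        rfl
    · rcases eq_root_or_exists_eq_cons z with rfl | ⟨c, x, rfl⟩
      exacts [⟨none, rfl⟩, ⟨some (c, x), rfl⟩]

def configEquiv (k n : ℕ) : (TV k (n + 1) → Bool) ≃ Bool × (Fin k → TV k n → Bool) :=
  ((decompEquiv k n).symm.arrowCongr (Equiv.refl Bool)).trans
    (Equiv.piOptionEquivProd.trans ((Equiv.refl Bool).prodCongr (Equiv.curry _ _ _)))

theorem configEquiv_apply (η : TV k (n + 1) → Bool) :
    configEquiv k n η = (η (rootT k (n + 1)), fun c y => η (cons c y)) := rfl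

end TV

theorem wt_succ {k n : ℕ} (p : ℝ) (η : TV k (n + 1) → Bool) :
    wt p η = (if η (rootT k (n + 1)) then p else 1 - p) *
      ∏ c, wt p (fun y => η (TV.cons c y)) := by
  simp only [wt]
  rw [← (TV.decompEquiv k n).prod_comp, Fintype.prod_option, Fintype.prod_prod_type]
  rfl

section Bootstrap

variable {k n : ℕ} (j : ℕ)

theorem bootO_eq_true_iff (η : TV k n → Bool) (x : TV k n) :
    bootO j η x = true ↔ η x = true ∧ #{y | childOf x y ∧ η y = false} < j := by
  simp [bootO]

theorem bootO_le (η : TV k n → Bool) : bootO j η ≤ η :=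
  fun x => Bool.le_iff_imp.2 fun h => ((bootO_eq_true_iff j η x).1 h).1

theorem antitone_iterate_bootO (η : TV k n → Bool) : Antitone fun m => (bootO j)^[m] η :=
  antitone_nat_of_succ_le fun m => by
    rw [Function.iterate_succ_apply']
    exact bootO_le j _

theorem iterate_bootO_succ_eq_true_iff (m : ℕ) (η : TV k n → Bool) (x : TV k n) :
    (bootO j)^[m + 1] η x = true ↔
      η x = true ∧ #{y | childOf x y ∧ (bootO j)^[m] η y = false} < j := by
  rw [Function.iterate_succ_apply', bootO_eq_true_iff]
  refine and_congr_left fun hlt => ⟨fun h => ?_, fun hx => ?_⟩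
  · exact Bool.le_iff_imp.1 (antitone_iterate_bootO j η (Nat.zero_le m) x) h
  · suffices ∀ l ≤ m, (bootO j)^[l] η x = true from this m le_rfl
    intro l hl
    induction l with
    | zero => exact hx
    | succ l ih =>
      rw [Function.iterate_succ_apply', bootO_eq_true_iff]
      refine ⟨ih (by omega), lt_of_le_of_lt (card_le_card fun y hy => ?_) hlt⟩
      simp only [mem_filter, mem_univ, true_and] at hy ⊢
      exact ⟨hy.1, Bool.eq_false_of_le_false (hy.2 ▸ antitone_iterate_bootO j η (by omega) y)⟩

theorem card_filter_childOf_cons (P : TV k (n + 1) → Prop) [DecidablePred P] (c : Fin k)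
    (x : TV k n) : #{z | childOf (TV.cons c x) z ∧ P z} = #{y | childOf x y ∧ P (TV.cons c y)} := by
  symm
  refine card_nbij (TV.cons c) (fun y hy => ?_) (fun y _ y' _ h => (TV.cons_inj.1 h).2) ?_
  · simp only [coe_filter, mem_univ, true_and, Set.mem_ofPred_eq] at hy ⊢
    exact ⟨(TV.childOf_cons_iff c x _).2 ⟨y, hy.1, rfl⟩, hy.2⟩
  · intro z hz
    simp only [coe_filter, mem_univ, true_and, Set.mem_ofPred_eq] at hz
    obtain ⟨y, hy, rfl⟩ := (TV.childOf_cons_iff c x z).1 hz.1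
    exact ⟨y, by simpa using ⟨hy, hz.2⟩, rfl⟩

theorem card_filter_childOf_root (P : TV k (n + 1) → Prop) [DecidablePred P] :
    #{z | childOf (rootT k (n + 1)) z ∧ P z} = #{c | P (TV.cons c (rootT k n))} := by
  symm
  refine card_nbij (TV.cons · (rootT k n)) (fun c hc => ?_)
    (fun c _ c' _ h => (TV.cons_inj.1 h).1) ?_
  · simp only [coe_filter, mem_univ, true_and, Set.mem_ofPred_eq] at hc ⊢
    exact ⟨(TV.childOf_root_iff _).2 ⟨c, rfl⟩, hc⟩
  · intro z hz
    simp only [coe_filter, mem_univ, true_and, Set.mem_ofPred_eq] at hz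
    obtain ⟨c, rfl⟩ := (TV.childOf_root_iff z).1 hz.1
    exact ⟨c, by simpa using hz.2, rfl⟩

theorem bootO_cons (η : TV k (n + 1) → Bool) (c : Fin k) (x : TV k n) :
    bootO j η (TV.cons c x) = bootO j (fun y => η (TV.cons c y)) x := by
  simp only [bootO, card_filter_childOf_cons]

theorem iterate_bootO_cons (m : ℕ) (η : TV k (n + 1) → Bool) (c : Fin k) (x : TV k n) :
    (bootO j)^[m] η (TV.cons c x) = (bootO j)^[m] (fun y => η (TV.cons c y)) x := by
  induction m generalizing η with
  | zero => rfl
  | succ m ih => simp only [Function.iterate_succ_apply, ih, bootO_cons]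

theorem iterate_bootO_succ_root_eq_true_iff (m : ℕ) (η : TV k (n + 1) → Bool) :
    (bootO j)^[m + 1] η (rootT k (n + 1)) = true ↔ η (rootT k (n + 1)) = true ∧
      #{c | (bootO j)^[m] (fun y => η (TV.cons c y)) (rootT k n) = false} < j := by
  rw [iterate_bootO_succ_eq_true_iff, card_filter_childOf_root]
  simp only [iterate_bootO_cons]

end Bootstrap

theorem probEv_iterate_bootO_succ_root {k j : ℕ} (n : ℕ) (p : ℝ) (hjk : j ≤ k) :
    probEv p (fun η : TV k (n + 1) → Bool => (bootO j)^[n + 1] η (rootT k (n + 1)) = true) =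
      g k j p (probEv p (fun ξ : TV k n → Bool => (bootO j)^[n] ξ (rootT k n) = true)) := by
  set φ : Finset (Fin k) → ℝ := fun s => if #sᶜ < j then 1 else 0
  have hsplit :
      probEv p (fun η : TV k (n + 1) → Bool => (bootO j)^[n + 1] η (rootT k (n + 1)) = true) =
        ∑ bf : Bool × (Fin k → TV k n → Bool),
          ((if bf.1 then p else 1 - p) * ∏ c, wt p (bf.2 c)) *
            ((if bf.1 then 1 else 0) * φ {c | (bootO j)^[n] (bf.2 c) (rootT k n) = true}) := by
    refine Fintype.sum_equiv (TV.configEquiv k n) _ _ fun η => ?_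
    rw [TV.configEquiv_apply, wt_succ]
    have hcompl (f : Fin k → TV k n → Bool) :
        (univ.filter fun c => (bootO j)^[n] (f c) (rootT k n) = true)ᶜ =
          univ.filter fun c => (bootO j)^[n] (f c) (rootT k n) = false := by
      ext; simp
    simp only [iterate_bootO_succ_root_eq_true_iff, φ, hcompl]
    split_ifs <;> simp_all
  have hbinomial := sum_ite_card_compl_lt_mul_pow (ι := Fin k) (by simpa using hjk)
    (probEv p (fun ξ : TV k n → Bool => (bootO j)^[n] ξ (rootT k n) = true))
  simp only [Fintype.card_fin] at hbinomial
  rw [hsplit, Fintype.sum_prod_type, Fintype.sum_bool]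
  simp only [if_true, Bool.false_eq_true, if_false, zero_mul, mul_zero, sum_const_zero, add_zero,
    one_mul]
  simp_rw [mul_assoc, ← mul_sum]
  rw [sum_prod_wt_mul_filter p (fun ξ => (bootO j)^[n] ξ (rootT k n) = true), Fintype.card_fin, g,
    ← hbinomial]

theorem oriented_bootstrap_prob_general (k j n : ℕ) (p : ℝ) (hjk : j ≤ k) :
    probEv p (fun η : TV k n → Bool => (bootO j)^[n] η (rootT k n) = true)
      = (g k j p)^[n] p := by
  induction n with
  | zero => exact probEv_coord p (rootT k 0)
  | succ n ih => rw [Function.iterate_succ_apply', ← ih, probEv_iterate_bootO_succ_root n p hjk]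

theorem oriented_bootstrap_prob (k j n : ℕ) (p : ℝ) (hk : 2 ≤ k) (hj1 : 1 ≤ j) (hjk : j ≤ k)
    (hp : p ∈ Set.Icc (0 : ℝ) 1) :
    probEv p (fun η : TV k n → Bool => (bootO j)^[n] η (rootT k n) = true)
      = (g k j p)^[n] p :=
  oriented_bootstrap_prob_general k j n p hjk
end
end

section
/- Let k ≥ 1, n ≥ 0 and p ∈ (0,1). On the rooted k-ary tree of depth n with Bernoulli(p) product measure μ, every function f : Ω_n → ℝ satisfies Var_μ(f) ≤ ∑_{x ∈ V_n} μ( Var_x( μ_{T̂_x}(f) ) ), where T̂_x is the set of strict descendants of x (the subtree rooted at x with x removed), μ_{T̂_x}(f) is the conditional expectation of f given the coordinates outside T̂_x, and Var_x denotes the conditional variance in the coordinate η_x given all other coordinates. -/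
/-!
Order the vertices by depth and reveal the configuration from the leaves up: conditioning
successively on larger and larger descendant-closed sets `S` of vertices, the variance of `f`
telescopes into the increments `μ((μ_S f)²) - μ((μ_{S ∪ {x}} f)²) = μ(Var_x(μ_S f))`, where
`x ∉ S` is a vertex whose strict descendants all lie in `S`. Since `T̂_x ⊆ S`, we have
`μ_S f = μ_{S \ T̂_x}(μ_{T̂_x} f)`, and averaging over coordinates other than `x` can only
decrease the mean of `Var_x` (Jensen), which bounds the increment by `μ(Var_x(μ_{T̂_x} f))`.
-/

open scoped Classical

noncomputable section

/-- `y` is a strict descendant of `x` in the rooted tree. -/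
def strictDescOf {k n : ℕ} (x y : TV k n) : Prop :=
  ∃ h : x.1.val < y.1.val, ∀ i : Fin x.1.val, y.2 ⟨i.val, i.2.trans h⟩ = x.2 i

/-- `T̂_x`: the set of strict descendants of `x` (the subtree rooted at `x`, with `x` removed). -/
def descSet {k n : ℕ} (x : TV k n) : Finset (TV k n) :=
  Finset.univ.filter (strictDescOf x)

open Finset

section BernoulliProduct

variable {V : Type*} [Fintype V] [DecidableEq V] {p : ℝ}

def cexpKernel (p : ℝ) (A : Finset V) (η ζ : V → Bool) : ℝ :=
  ∏ x : V, if x ∈ A then (if ζ x then p else 1 - p) else (if ζ x = η x then 1 else 0)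

lemma cexp_eq_sum_cexpKernel (A : Finset V) (f : (V → Bool) → ℝ) (η : V → Bool) :
    cexp p A f η = ∑ ζ, cexpKernel p A η ζ * f ζ := rfl

lemma cexpKernel_nonneg (hp₀ : 0 ≤ p) (hp₁ : p ≤ 1) (A : Finset V) (η ζ : V → Bool) :
    0 ≤ cexpKernel p A η ζ :=
  prod_nonneg fun x _ => by split_ifs <;> linarith

lemma cexpKernel_eq_zero {A : Finset V} {η ζ : V → Bool} {x : V} (hx : x ∉ A)
    (hne : ζ x ≠ η x) : cexpKernel p A η ζ = 0 :=
  prod_eq_zero (mem_univ x) (by simp [hx, hne])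

lemma sum_cexpKernel (A : Finset V) (η : V → Bool) : ∑ ζ, cexpKernel p A η ζ = 1 := by
  unfold cexpKernel
  rw [← Fintype.prod_sum fun (x : V) (c : Bool) =>
    if x ∈ A then (if c then p else 1 - p) else (if c = η x then 1 else 0)]
  refine prod_eq_one fun x _ => ?_
  by_cases hA : x ∈ A
  · simp [hA]
  · cases η x <;> simp [hA]

lemma sum_cexpKernel_mul_cexpKernel (A B : Finset V) (η ξ : V → Bool) :
    ∑ ζ, cexpKernel p A η ζ * cexpKernel p B ζ ξ = cexpKernel p (A ∪ B) η ξ := by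
  unfold cexpKernel
  simp only [← prod_mul_distrib]
  rw [← Fintype.prod_sum fun (x : V) (c : Bool) =>
    (if x ∈ A then (if c then p else 1 - p) else (if c = η x then 1 else 0)) *
    (if x ∈ B then (if ξ x then p else 1 - p) else (if ξ x = c then 1 else 0))]
  refine prod_congr rfl fun x _ => ?_
  rw [Fintype.sum_bool]
  by_cases hA : x ∈ A <;> by_cases hB : x ∈ B <;> cases ξ x <;> cases η x <;>
    simp [hA, hB] <;> ring

lemma cexp_cexp (A B : Finset V) (f : (V → Bool) → ℝ) (η : V → Bool) :
    cexp p A (cexp p B f) η = cexp p (A ∪ B) f η := by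
  simp only [cexp_eq_sum_cexpKernel, mul_sum]
  rw [sum_comm]
  refine sum_congr rfl fun ξ _ => ?_
  rw [← sum_cexpKernel_mul_cexpKernel A B η ξ, sum_mul]
  exact sum_congr rfl fun ζ _ => by ring

lemma cexp_univ (f : (V → Bool) → ℝ) (η : V → Bool) : cexp p univ f η = mean p f := by
  simp [cexp, mean, wt]

lemma cexp_empty (f : (V → Bool) → ℝ) (η : V → Bool) : cexp p ∅ f η = f η := by
  rw [cexp_eq_sum_cexpKernel, sum_eq_single η]
  · simp [cexpKernel]
  · intro ζ _ hne
    obtain ⟨x, hx⟩ := Function.ne_iff.1 hne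
    rw [cexpKernel_eq_zero (notMem_empty x) hx, zero_mul]
  · simp

lemma cexp_const (A : Finset V) (c : ℝ) (η : V → Bool) : cexp p A (fun _ => c) η = c := by
  rw [cexp_eq_sum_cexpKernel, ← sum_mul, sum_cexpKernel, one_mul]

lemma cexp_sub (A : Finset V) (f g : (V → Bool) → ℝ) (η : V → Bool) :
    cexp p A (fun ζ => f ζ - g ζ) η = cexp p A f η - cexp p A g η := by
  simp only [cexp_eq_sum_cexpKernel, mul_sub, sum_sub_distrib]

lemma cexp_congr_of_eq_off {A : Finset V} (f : (V → Bool) → ℝ) {ζ η : V → Bool}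
    (h : ∀ x ∉ A, ζ x = η x) : cexp p A f ζ = cexp p A f η := by
  simp only [cexp_eq_sum_cexpKernel, cexpKernel]
  refine sum_congr rfl fun ξ _ => congrArg (· * f ξ) (prod_congr rfl fun x _ => ?_)
  by_cases hx : x ∈ A
  · simp [hx]
  · simp [hx, h x hx]

lemma cexp_mul_of_eq_off {A : Finset V} (f m : (V → Bool) → ℝ) {η : V → Bool}
    (hm : ∀ ζ, (∀ x ∉ A, ζ x = η x) → m ζ = m η) :
    cexp p A (fun ζ => f ζ * m ζ) η = cexp p A f η * m η := by
  simp only [cexp_eq_sum_cexpKernel, sum_mul]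
  refine sum_congr rfl fun ζ _ => ?_
  by_cases h : ∀ x ∉ A, ζ x = η x
  · rw [hm ζ h]; ring
  · push Not at h
    obtain ⟨x, hx, hne⟩ := h
    rw [cexpKernel_eq_zero hx hne]; ring

lemma sq_cexp_le_cexp_sq (hp₀ : 0 ≤ p) (hp₁ : p ≤ 1) (A : Finset V) (f : (V → Bool) → ℝ)
    (η : V → Bool) : cexp p A f η ^ 2 ≤ cexp p A (fun ζ => f ζ ^ 2) η := by
  have hw := cexpKernel_nonneg hp₀ hp₁ A η
  have hcs := sum_sq_le_sum_mul_sum_of_sq_le_mul univ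
    (r := fun ζ => cexpKernel p A η ζ * f ζ) (f := cexpKernel p A η)
    (g := fun ζ => cexpKernel p A η ζ * f ζ ^ 2) (fun ζ _ => hw ζ)
    (fun ζ _ => mul_nonneg (hw ζ) (sq_nonneg (f ζ))) (fun ζ _ => le_of_eq (by ring))
  rwa [sum_cexpKernel, one_mul] at hcs

lemma mean_cexp (A : Finset V) (f : (V → Bool) → ℝ) : mean p (cexp p A f) = mean p f := by
  rw [← cexp_univ (cexp p A f) (fun _ => false), cexp_cexp, union_eq_left.2 (subset_univ A),
    cexp_univ]

lemma mean_const (c : ℝ) : mean p (fun _ : V → Bool => c) = c := by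
  rw [← cexp_univ _ (fun _ => false), cexp_const]

lemma mean_add (f g : (V → Bool) → ℝ) :
    mean p (fun η => f η + g η) = mean p f + mean p g := by
  simp only [mean, mul_add, sum_add_distrib]

lemma mean_sub (f g : (V → Bool) → ℝ) :
    mean p (fun η => f η - g η) = mean p f - mean p g := by
  simp only [mean, mul_sub, sum_sub_distrib]

lemma mean_const_mul (c : ℝ) (f : (V → Bool) → ℝ) :
    mean p (fun η => c * f η) = c * mean p f := by
  simp only [mean, mul_sum]
  exact sum_congr rfl fun η _ => by ring

lemma mean_mono (hp₀ : 0 ≤ p) (hp₁ : p ≤ 1) {f g : (V → Bool) → ℝ} (h : ∀ η, f η ≤ g η) :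
    mean p f ≤ mean p g :=
  sum_le_sum fun η _ => mul_le_mul_of_nonneg_left (h η)
    (prod_nonneg fun x _ => by split_ifs <;> linarith)

lemma mean_cvar (A : Finset V) (h : (V → Bool) → ℝ) :
    mean p (cvar p A h) = mean p (fun η => h η ^ 2) - mean p (fun η => cexp p A h η ^ 2) := by
  unfold cvar
  rw [mean_sub (cexp p A fun ζ => h ζ ^ 2), mean_cexp]

lemma mean_cvar_eq_mean_sq_sub_cexp (A : Finset V) (h : (V → Bool) → ℝ) :
    mean p (cvar p A h) = mean p (fun η => (h η - cexp p A h η) ^ 2) := by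
  have hcross : mean p (fun η => h η * cexp p A h η) = mean p (fun η => cexp p A h η ^ 2) := by
    rw [← mean_cexp A]
    congr 1
    funext η
    rw [cexp_mul_of_eq_off h _ fun ζ hζ => cexp_congr_of_eq_off h hζ, sq]
  have hexpand : (fun η => (h η - cexp p A h η) ^ 2) =
      fun η => (h η ^ 2 + cexp p A h η ^ 2) - 2 * (h η * cexp p A h η) := by
    funext η; ring
  rw [hexpand, mean_sub, mean_add, mean_const_mul, hcross, mean_cvar]
  ring

lemma mean_cvar_cexp_le (hp₀ : 0 ≤ p) (hp₁ : p ≤ 1) (A C : Finset V) (g : (V → Bool) → ℝ) :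
    mean p (cvar p A (cexp p C g)) ≤ mean p (cvar p A g) := by
  have hcomm : ∀ η, cexp p C g η - cexp p A (cexp p C g) η =
      cexp p C (fun ζ => g ζ - cexp p A g ζ) η := fun η => by
    rw [cexp_sub, cexp_cexp, cexp_cexp, union_comm]
  simp only [mean_cvar_eq_mean_sq_sub_cexp, hcomm]
  calc mean p (fun η => cexp p C (fun ζ => g ζ - cexp p A g ζ) η ^ 2)
      ≤ mean p (cexp p C fun ζ => (g ζ - cexp p A g ζ) ^ 2) :=
        mean_mono hp₀ hp₁ fun η => sq_cexp_le_cexp_sq hp₀ hp₁ C _ η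
    _ = mean p (fun η => (g η - cexp p A g η) ^ 2) := mean_cexp _ _

lemma mean_sq_cexp_sub_mean_sq_cexp_insert_le (hp₀ : 0 ≤ p) (hp₁ : p ≤ 1)
    (f : (V → Bool) → ℝ) {S D : Finset V} {x : V} (hDS : D ⊆ S) :
    mean p (fun η => cexp p S f η ^ 2) - mean p (fun η => cexp p (insert x S) f η ^ 2) ≤
      mean p (cvar p {x} (cexp p D f)) := by
  have hS : cexp p S f = cexp p (S \ D) (cexp p D f) := by
    funext η
    rw [cexp_cexp, sdiff_union_of_subset hDS]
  calc _ = mean p (cvar p {x} (cexp p S f)) := by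
        simp only [mean_cvar, cexp_cexp, ← insert_eq]
    _ ≤ mean p (cvar p {x} (cexp p D f)) := hS ▸ mean_cvar_cexp_le hp₀ hp₁ {x} (S \ D) _

theorem mean_sq_sub_mean_sq_cexp_le_sum {β : Type*} [LinearOrder β] (hp₀ : 0 ≤ p) (hp₁ : p ≤ 1)
    (r : V → β) (D : V → Finset V) (hD : ∀ x, ∀ y ∈ D x, r x < r y) (f : (V → Bool) → ℝ)
    (S : Finset V) (hS : ∀ x ∈ S, D x ⊆ S) :
    mean p (fun η => f η ^ 2) - mean p (fun η => cexp p S f η ^ 2) ≤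
      ∑ x ∈ S, mean p (cvar p {x} (cexp p (D x) f)) := by
  induction S using induction_on_min_value r with
  | empty => simp [cexp_empty]
  | insert x S hxS hmin ih =>
    have hDx : D x ⊆ S := fun y hy =>
      (mem_insert.1 (hS x (mem_insert_self x S) hy)).resolve_left fun h =>
        (hD x y hy).ne (congrArg r h.symm)
    have hclosed : ∀ y ∈ S, D y ⊆ S := fun y hy z hz =>
      (mem_insert.1 (hS y (mem_insert_of_mem hy) hz)).resolve_left fun h =>
        (hmin y hy).not_gt (h ▸ hD y z hz)
    rw [sum_insert hxS]
    linarith [ih hclosed, mean_sq_cexp_sub_mean_sq_cexp_insert_le hp₀ hp₁ f (x := x) hDx]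

theorem varTot_le_sum_mean_cvar_cexp {β : Type*} [LinearOrder β] (hp₀ : 0 ≤ p) (hp₁ : p ≤ 1)
    (r : V → β) (D : V → Finset V) (hD : ∀ x, ∀ y ∈ D x, r x < r y) (f : (V → Bool) → ℝ) :
    varTot p f ≤ ∑ x, mean p (cvar p {x} (cexp p (D x) f)) := by
  have hmean : mean p (fun η => cexp p univ f η ^ 2) = mean p f ^ 2 := by
    simp only [cexp_univ, mean_const]
  rw [varTot, ← hmean]
  exact mean_sq_sub_mean_sq_cexp_le_sum hp₀ hp₁ r D hD f univ fun x _ => subset_univ _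

end BernoulliProduct

lemma depth_lt_of_mem_descSet {k n : ℕ} (x : TV k n) : ∀ y ∈ descSet x, x.1 < y.1 :=
  fun _ hy => (mem_filter.1 hy).2.1

theorem tree_variance_decomposition_general (k n : ℕ) (p : ℝ) (hp : p ∈ Set.Ioo (0 : ℝ) 1)
    (f : (TV k n → Bool) → ℝ) :
    varTot p f ≤ ∑ x : TV k n, mean p (cvar p {x} (cexp p (descSet x) f)) :=
  varTot_le_sum_mean_cvar_cexp hp.1.le hp.2.le (fun x : TV k n => x.1) descSet
    depth_lt_of_mem_descSet f

theorem tree_variance_decomposition (k n : ℕ) (p : ℝ) (hk : 1 ≤ k) (hp : p ∈ Set.Ioo (0 : ℝ) 1)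
    (f : (TV k n → Bool) → ℝ) :
    varTot p f ≤ ∑ x : TV k n, mean p (cvar p {x} (cexp p (descSet x) f)) :=
  tree_variance_decomposition_general k n p hp f
end
end
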